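/- Let g ≥ 1 be an integer and let p be a prime with p > 2g + 1. Then there exists a prime ℓ ≥ 3 such that p does not divide (ℓ - 1) · ℓ^(g²) · ∏_{i=1}^{g} (ℓ^(2i) - 1). -/

import Mathlib

/-!
Choose, by Dirichlet's theorem, a prime `ℓ > p` that is a primitive root modulo `p`. Then `p ∤ ℓ`,
and since `ℓ` has multiplicative order `p - 1 > 2g` modulo `p`, `p` divides none of the factors
`ℓ - 1` and `ℓ ^ (2i) - 1` with `1 ≤ i ≤ g`.
-/

theorem Nat.exists_prime_gt_orderOf_eq_sub_one {p : ℕ} (hp : p.Prime) (n : ℕ) :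
    ∃ ℓ > n, ℓ.Prime ∧ orderOf (ℓ : ZMod p) = p - 1 := by
  have := Fact.mk hp
  obtain ⟨ζ, hζ⟩ := IsCyclic.exists_ofOrder_eq_natCard (α := (ZMod p)ˣ)
  obtain ⟨ℓ, hnℓ, hℓ, hℓζ⟩ := Nat.forall_exists_prime_gt_and_eq_mod ζ.isUnit n
  refine ⟨ℓ, hnℓ, hℓ, ?_⟩
  rw [hℓζ, orderOf_units, hζ, Nat.card_eq_fintype_card, ZMod.card_units]

theorem Nat.not_dvd_pow_sub_one_of_lt_orderOf {m ℓ n : ℕ} (hℓ : 0 < ℓ) (hn : 0 < n)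
    (hlt : n < orderOf (ℓ : ZMod m)) : ¬ m ∣ ℓ ^ n - 1 := by
  intro hdvd
  have hpow : (ℓ : ZMod m) ^ n = 1 := by
    rw [← Nat.cast_pow, ← Nat.cast_one, ZMod.natCast_eq_natCast_iff]
    exact ((Nat.modEq_iff_dvd' (Nat.one_le_pow _ _ hℓ)).2 hdvd).symm
  exact (Nat.le_of_dvd hn (orderOf_dvd_of_pow_eq_one hpow)).not_gt hlt

/-- For `g ≥ 1` and a prime `p > 2g + 1`, there exists a prime `ℓ ≥ 3`
such that `p` does not divide `(ℓ - 1) · ℓ^(g²) · ∏_{i=1}^{g} (ℓ^(2i) - 1)`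
(the order of `GSp_{2g}(ℤ/ℓℤ)`). -/
theorem stmt0 (g p : ℕ) (hg : 1 ≤ g) (hp : p.Prime) (hpg : 2 * g + 1 < p) :
    ∃ ℓ : ℕ, ℓ.Prime ∧ 3 ≤ ℓ ∧
      ¬ p ∣ (ℓ - 1) * ℓ ^ (g ^ 2) * ∏ i ∈ Finset.Icc 1 g, (ℓ ^ (2 * i) - 1) := by
  obtain ⟨ℓ, hpℓ, hℓ, hord⟩ := Nat.exists_prime_gt_orderOf_eq_sub_one hp p
  refine ⟨ℓ, hℓ, by omega, ?_⟩
  have hp_not_dvd_pow : ¬ p ∣ ℓ ^ (g ^ 2) := fun h =>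
    hpℓ.ne ((Nat.prime_dvd_prime_iff_eq hp hℓ).1 (hp.dvd_of_dvd_pow h))
  simp only [hp.dvd_mul, hp.prime.dvd_finsetProd_iff, Finset.mem_Icc, not_or, not_exists, not_and]
  refine ⟨⟨?_, hp_not_dvd_pow⟩, fun i hi => ?_⟩
  · simpa using Nat.not_dvd_pow_sub_one_of_lt_orderOf hℓ.pos one_pos (by rw [hord]; omega)
  · exact Nat.not_dvd_pow_sub_one_of_lt_orderOf (n := 2 * i) hℓ.pos (by omega) (by rw [hord]; omega)
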